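/- arXiv:2501.18304 — 7 statements merged into one kernel-verified Lean document; each statement's English description precedes it below -/
import Mathlib

section
/- Let W be a committee of size k, T a potential deviation, and A ⊆ C a ballot. Summing over all x ∈ W \ T and y ∈ T \ W the change in PAV score of the ballot A under swapping x for y equals δ_A = |(W \ T) \ A| · |(T \ W) ∩ A| / (|A ∩ W| + 1) − |(W \ T) ∩ A| · |(T \ W) \ A| / |A ∩ W| (with the convention that the second term is 0 when |A ∩ W| = 0). -/
/-- The `j`-th pavHarmonic number `H(j) = 1 + 1/2 + ⋯ + 1/j`, with `H(0) = 0`. -/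
def pavHarmonic (j : ℕ) : ℚ := ∑ i ∈ Finset.range j, (1 : ℚ) / (i + 1)

lemma pavHarmonic_succ (n : ℕ) : pavHarmonic (n + 1) = pavHarmonic n + 1 / (n + 1) := by
  simp [pavHarmonic, Finset.sum_range_succ]

lemma pav_key {α : Type*} [DecidableEq α] (W A : Finset α) {x y : α}
    (hx : x ∈ W) (hy : y ∉ W) :
    pavHarmonic ((A ∩ (insert y (W.erase x))).card) - pavHarmonic ((A ∩ W).card)
      = (if x ∈ A then 0 else 1) * (if y ∈ A then 1 else 0) * (1 / (((A ∩ W).card : ℚ) + 1))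
        - (if x ∈ A then 1 else 0) * (if y ∈ A then 0 else 1) * (1 / (((A ∩ W).card : ℚ))) := by
  have hyAW : y ∉ A ∩ W.erase x := fun h => hy (Finset.mem_of_mem_erase (Finset.mem_of_mem_inter_right h))
  by_cases hyA : y ∈ A <;> by_cases hxA : x ∈ A
  · -- y ∈ A, x ∈ A : card = m
    rw [Finset.inter_insert_of_mem hyA, Finset.inter_erase]
    have hxAW : x ∈ A ∩ W := Finset.mem_inter.2 ⟨hxA, hx⟩
    rw [Finset.card_insert_of_notMem (by rwa [Finset.inter_erase] at hyAW),
      Finset.card_erase_of_mem hxAW, Nat.sub_add_cancel (Finset.card_pos.2 ⟨x, hxAW⟩)]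
    simp [hxA, hyA]
  · -- y ∈ A, x ∉ A : card = m+1
    rw [Finset.inter_insert_of_mem hyA, Finset.inter_erase,
      Finset.erase_eq_of_notMem (fun h => hxA (Finset.mem_of_mem_inter_left h)),
      Finset.card_insert_of_notMem (fun h => hy (Finset.mem_of_mem_inter_right h)),
      pavHarmonic_succ]
    simp [hxA, hyA]
  · -- y ∉ A, x ∈ A : card = m-1
    rw [Finset.inter_insert_of_notMem hyA, Finset.inter_erase]
    have hxAW : x ∈ A ∩ W := Finset.mem_inter.2 ⟨hxA, hx⟩
    have hm : 1 ≤ (A ∩ W).card := Finset.card_pos.2 ⟨x, hxAW⟩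
    rw [Finset.card_erase_of_mem hxAW]
    have h1 : (A ∩ W).card = ((A ∩ W).card - 1) + 1 := (Nat.sub_add_cancel hm).symm
    rw [h1, pavHarmonic_succ]
    have : (((A ∩ W).card - 1 : ℕ) : ℚ) + 1 = (((A ∩ W).card - 1) + 1 : ℕ) := by push_cast; ring
    simp [hxA, hyA, this, ← h1]
  · -- y ∉ A, x ∉ A : card = m
    rw [Finset.inter_insert_of_notMem hyA, Finset.inter_erase,
      Finset.erase_eq_of_notMem (fun h => hxA (Finset.mem_of_mem_inter_left h))]
    simp [hxA, hyA]

/-- Summing, over all `x ∈ W \ T` and `y ∈ T \ W`, the change in PAV score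
of ballot `A` under swapping `x` for `y` equals
`δ_A = |(W\T)\A|·|(T\W)∩A| / (|A∩W|+1) − |(W\T)∩A|·|(T\W)\A| / |A∩W|`
(the second term being `0` when `|A∩W| = 0`, which is Lean's division convention). -/
theorem pav_swap_sum_eq {α : Type*} [DecidableEq α]
    (W T A : Finset α) :
    ∑ x ∈ W \ T, ∑ y ∈ T \ W,
        (pavHarmonic ((A ∩ (insert y (W.erase x))).card) - pavHarmonic ((A ∩ W).card))
      = (((W \ T) \ A).card : ℚ) * (((T \ W) ∩ A).card : ℚ) / ((A ∩ W).card + 1)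
        - (((W \ T) ∩ A).card : ℚ) * (((T \ W) \ A).card : ℚ) / ((A ∩ W).card) := by
  have hrw : ∀ x ∈ W \ T, ∀ y ∈ T \ W,
      pavHarmonic ((A ∩ (insert y (W.erase x))).card) - pavHarmonic ((A ∩ W).card)
      = (if x ∈ A then 0 else 1) * (if y ∈ A then 1 else 0) * (1 / (((A ∩ W).card : ℚ) + 1))
        - (if x ∈ A then 1 else 0) * (if y ∈ A then 0 else 1) * (1 / (((A ∩ W).card : ℚ))) := by
    intro x hx y hy
    exact pav_key W A (Finset.mem_sdiff.1 hx).1 (Finset.mem_sdiff.1 hy).2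
  rw [Finset.sum_congr rfl (fun x hx => Finset.sum_congr rfl (fun y hy => hrw x hx y hy))]
  have hA : ∀ s : Finset α, (∑ x ∈ s, (if x ∈ A then (0:ℚ) else 1)) = ((s \ A).card : ℚ) := by
    intro s
    rw [Finset.sdiff_eq_filter]
    rw [Finset.card_filter]
    push_cast
    exact Finset.sum_congr rfl (fun x _ => by by_cases h : x ∈ A <;> simp [h])
  have hB : ∀ s : Finset α, (∑ x ∈ s, (if x ∈ A then (1:ℚ) else 0)) = ((s ∩ A).card : ℚ) := by
    intro s
    rw [← Finset.filter_mem_eq_inter, Finset.card_filter]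
    push_cast
    rfl
  simp only [Finset.sum_sub_distrib, ← Finset.sum_mul, ← Finset.mul_sum]
  rw [hA (W \ T), hB (T \ W), hB (W \ T), hA (T \ W)]
  ring
end

section
/- Let k ≤ 7 and |T| ≤ k with T not contained in W, where |W| = k. Write w' = |W \ T|, t' = |T \ W|, and suppose a, b, c are natural numbers with a ≤ w', b ≤ |W ∩ T|, c ≤ t', and b + c > a + b (i.e., c > a). Then (w' − a)·c/(a + b + 1) − a·(t' − c)/(a + b) > (k/|T| − 1)·t' (with the convention that the term a·(t'−c)/(a+b) is 0 when a + b = 0, noting a = 0 in that case). -/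
set_option maxHeartbeats 4000000 in
lemma aux_key_ineq_k7 (tW w' t' c a b : ℕ)
    (h7 : w' + tW ≤ 7) (h1 : 1 ≤ t') (h2 : t' ≤ w') (h3 : c ≤ t')
    (h4 : a < c) (h5 : b ≤ tW) (h6 : 1 ≤ a + b) :
    (t'+tW)*a*(t'-c)*(a+b+1) + (w'-t')*t'*(a+b)*(a+b+1)
      < (t'+tW)*(w'-a)*c*(a+b) := by
  have htw : tW ≤ 7 := by omega
  have hw7 : w' ≤ 7 := by omega
  have ht7 : t' ≤ 7 := by omega
  have hc7 : c ≤ 7 := by omega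
  have ha7 : a ≤ 7 := by omega
  have hb7 : b ≤ 7 := by omega
  interval_cases tW <;> interval_cases w' <;> interval_cases t' <;>
    interval_cases c <;> interval_cases a <;> interval_cases b <;> omega

/-- The key combinatorial inequality for `k ≤ 7`. With `w' = |W \ T|`,
`t' = |T \ W|`, `tW = |W ∩ T|`, so `w' + tW = k = |W|` and `t' + tW = |T|`, and `T ⊄ W`
(i.e. `t' ≥ 1`), for all naturals `a ≤ w'`, `b ≤ tW`, `c ≤ t'` with `b + c > a + b`:
`(w' − a)·c/(a+b+1) − a·(t'−c)/(a+b) > (k/|T| − 1)·t'` (over ℚ, with `x/0 = 0`). -/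
theorem key_inequality_k7 (k tsize w' t' tW a b c : ℕ)
    (hk7 : k ≤ 7)
    (hW : w' + tW = k)
    (hT : t' + tW = tsize)
    (hT1 : 1 ≤ tsize) (hTk : tsize ≤ k)
    (ht' : 1 ≤ t')
    (ha : a ≤ w') (hb : b ≤ tW) (hc : c ≤ t')
    (hpref : b + c > a + b) :
    ((w' : ℚ) - a) * c / (a + b + 1) - (a : ℚ) * ((t' : ℚ) - c) / (a + b)
      > ((k : ℚ) / tsize - 1) * t' := by
  subst hW hT
  have h2 : t' ≤ w' := by omega
  have h4 : a < c := by omega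
  have hden : (0:ℚ) < (t':ℚ) + tW := by
    have h : (1:ℚ) ≤ (t':ℚ) := by exact_mod_cast ht'
    have h' : (0:ℚ) ≤ (tW:ℚ) := by positivity
    linarith
  have hrhs : ((↑(w' + tW) : ℚ) / ↑(t' + tW) - 1) * t'
      = ((w':ℚ) - t') * t' / ((t':ℚ) + tW) := by
    push_cast
    field_simp
    ring
  rw [gt_iff_lt, hrhs]
  rcases Nat.eq_zero_or_pos (a + b) with h0 | h1
  · obtain ⟨rfl, rfl⟩ : a = 0 ∧ b = 0 := by omega
    have hc1 : (1:ℚ) ≤ (c:ℚ) := by exact_mod_cast h4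
    have ht1 : (1:ℚ) ≤ (t':ℚ) := by exact_mod_cast ht'
    have h2q : (t':ℚ) ≤ (w':ℚ) := by exact_mod_cast h2
    have htWq : (0:ℚ) ≤ (tW:ℚ) := by positivity
    simp only [Nat.cast_zero, zero_mul, sub_zero, zero_div, zero_add, sub_zero]
    rw [div_lt_iff₀ hden]
    nlinarith [mul_nonneg (mul_nonneg (sub_nonneg.2 h2q) htWq) (le_trans zero_le_one ht1),
      mul_le_mul_of_nonneg_left hc1 (le_trans zero_le_one (le_trans ht1 h2q)),
      mul_pos (lt_of_lt_of_le zero_lt_one ht1) (lt_of_lt_of_le zero_lt_one ht1)]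
  · have key := aux_key_ineq_k7 tW w' t' c a b hk7 ht' h2 hc h4 hb h1
    have keyQ : ((t':ℚ)+tW)*a*((t':ℚ)-c)*((a:ℚ)+b+1) + ((w':ℚ)-t')*t'*((a:ℚ)+b)*((a:ℚ)+b+1)
        < ((t':ℚ)+tW)*((w':ℚ)-a)*c*((a:ℚ)+b) := by
      have hcast := (Nat.cast_lt (α := ℚ)).2 key
      push_cast [Nat.cast_sub h2, Nat.cast_sub hc, Nat.cast_sub ha] at hcast
      convert hcast using 2
    have hs : (0:ℚ) < (a:ℚ) + b := by exact_mod_cast h1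
    have hs1 : (0:ℚ) < (a:ℚ) + b + 1 := by linarith
    rw [div_sub_div _ _ (ne_of_gt hs1) (ne_of_gt hs), div_lt_div_iff₀ hden (by positivity)]
    nlinarith [keyQ]
end

section
/- In the 4-voter profile on 10 candidates where voter 1 approves {c1,c2,c3}, voter 2 approves {c1,c2,c4}, and voters 3 and 4 each approve {c5,...,c10}, the committee W = {c1,c2,c5,c6,c7,c8,c9,c10} of size k = 8 is not core stable: the set T = {c1,c2,c3,c4} is a successful deviation, since exactly 2 of the 4 voters strictly prefer T to W and 2 ≥ |T|·n/k = 4·4/8 = 2. -/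
open Finset

/-- The 4-voter profile on 10 candidates from Example 4.1. -/
def profile4 : Fin 4 → Finset (Fin 10) :=
  ![{0, 1, 2}, {0, 1, 3}, {4, 5, 6, 7, 8, 9}, {4, 5, 6, 7, 8, 9}]

/-- The committee `W = {c1,c2,c5,…,c10}` (size 8) is not core stable in this
profile: `T = {c1,c2,c3,c4}` is a successful deviation, as the number of voters strictly
preferring `T` to `W` is at least `|T|·n/k = 4·4/8 = 2`. -/
theorem pav_k8_counterexample :
    (((univ.filter fun i => (profile4 i ∩ ({0, 1, 2, 3} : Finset (Fin 10))).card
          > (profile4 i ∩ ({0, 1, 4, 5, 6, 7, 8, 9} : Finset (Fin 10))).card).card : ℚ)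
        ≥ (({0, 1, 2, 3} : Finset (Fin 10)).card : ℚ) * 4 / 8)
    ∧ ¬ (∀ T : Finset (Fin 10), T.Nonempty → T.card ≤ 8 →
        ((univ.filter fun i => (profile4 i ∩ T).card
            > (profile4 i ∩ ({0, 1, 4, 5, 6, 7, 8, 9} : Finset (Fin 10))).card).card : ℚ)
          < (T.card : ℚ) * 4 / 8) := by
  have h1 : (univ.filter fun i => (profile4 i ∩ ({0, 1, 2, 3} : Finset (Fin 10))).card
          > (profile4 i ∩ ({0, 1, 4, 5, 6, 7, 8, 9} : Finset (Fin 10))).card).card = 2 := by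
    decide
  have h2 : (({0, 1, 2, 3} : Finset (Fin 10)).card) = 4 := by decide
  constructor
  · rw [h1, h2]; norm_num
  · intro h
    have := h {0,1,2,3} ⟨0, by decide⟩ (by decide)
    rw [h1, h2] at this
    norm_num at this
end

section
/- In the same 4-voter profile on 10 candidates (voter 1: {c1,c2,c3}, voter 2: {c1,c2,c4}, voters 3,4: {c5,...,c10}), the committee W' = {c1,c2,c3,c5,c6,c7,c8,c9} of size 8 is core stable. -/
open Finset

lemma improve_iff (A T : Finset (Fin 10)) (m : ℕ) (hA : A.card = m + 1) :
    (A ∩ T).card > m ↔ A ⊆ T := by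
  constructor
  · intro h
    have hsub : A ∩ T ⊆ A := inter_subset_left
    have : A ∩ T = A :=
      Finset.eq_of_subset_of_card_le hsub (by omega)
    exact (Finset.inter_eq_left).mp this
  · intro h
    rw [Finset.inter_eq_left.mpr h, hA]
    omega

lemma pav_k8_core_aux :
    ∀ T : Finset (Fin 10), T.Nonempty → T.card ≤ 8 →
      2 * (univ.filter fun i => (profile4 i ∩ T).card
          > (profile4 i ∩ ({0, 1, 2, 4, 5, 6, 7, 8} : Finset (Fin 10))).card).card
        < T.card := by
  intro T hne hcard
  set W : Finset (Fin 10) := {0, 1, 2, 4, 5, 6, 7, 8} with hW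
  set p : Fin 4 → Prop := fun i => (profile4 i ∩ T).card > (profile4 i ∩ W).card with hp
  show 2 * (univ.filter p).card < T.card
  have hp0 : ¬ p 0 := by
    have h1 : (profile4 0 ∩ W).card = 3 := by decide
    have h2 : (profile4 0 ∩ T).card ≤ 3 := by
      have := Finset.card_le_card (Finset.inter_subset_left (s₁ := profile4 0) (s₂ := T))
      simpa [show (profile4 0).card = 3 by decide] using this
    simp only [hp, h1]
    omega
  have hp1 : p 1 ↔ profile4 1 ⊆ T := by
    have h1 : (profile4 1 ∩ W).card = 2 := by decide
    simp only [hp, h1]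
    exact improve_iff _ _ 2 (by decide)
  have hp2 : ∀ i : Fin 4, i = 2 ∨ i = 3 → (p i ↔ profile4 2 ⊆ T) := by
    intro i hi
    have h23 : profile4 i = profile4 2 := by rcases hi with h | h <;> subst h <;> rfl
    have h1 : (profile4 2 ∩ W).card = 5 := by decide
    simp only [hp, h23, h1]
    exact improve_iff _ _ 5 (by decide)
  by_cases hb : profile4 2 ⊆ T
  · have hT6 : 6 ≤ T.card := by
      have := Finset.card_le_card hb
      simpa [show (profile4 2).card = 6 by decide] using this
    by_cases ha : profile4 1 ⊆ T
    · exfalso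
      have hsub : profile4 1 ∪ profile4 2 ⊆ T := union_subset ha hb
      have := Finset.card_le_card hsub
      rw [show (profile4 1 ∪ profile4 2).card = 9 by decide] at this
      omega
    · have hsubF : (univ.filter p) ⊆ ({2, 3} : Finset (Fin 4)) := by
        intro i hi
        have hpi : p i := (mem_filter.mp hi).2
        fin_cases i
        · exact absurd hpi hp0
        · exact absurd ((hp1).mp hpi) ha
        · simp
        · simp
      have := Finset.card_le_card hsubF
      rw [show ({2,3} : Finset (Fin 4)).card = 2 by decide] at this
      omega
  · by_cases ha : profile4 1 ⊆ T
    · have hT3 : 3 ≤ T.card := by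
        have := Finset.card_le_card ha
        simpa [show (profile4 1).card = 3 by decide] using this
      have hsubF : (univ.filter p) ⊆ ({1} : Finset (Fin 4)) := by
        intro i hi
        have hpi : p i := (mem_filter.mp hi).2
        fin_cases i
        · exact absurd hpi hp0
        · simp
        · exact absurd ((hp2 2 (Or.inl rfl)).mp hpi) hb
        · exact absurd ((hp2 3 (Or.inr rfl)).mp hpi) hb
      have := Finset.card_le_card hsubF
      rw [show ({1} : Finset (Fin 4)).card = 1 by decide] at this
      omega
    · have hsubF : (univ.filter p) ⊆ (∅ : Finset (Fin 4)) := by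
        intro i hi
        have hpi : p i := (mem_filter.mp hi).2
        fin_cases i
        · exact absurd hpi hp0
        · exact absurd ((hp1).mp hpi) ha
        · exact absurd ((hp2 2 (Or.inl rfl)).mp hpi) hb
        · exact absurd ((hp2 3 (Or.inr rfl)).mp hpi) hb
      have := Finset.card_le_card hsubF
      simp only [Finset.card_empty] at this
      have hT1 : 1 ≤ T.card := Finset.card_pos.mpr hne
      omega

/-- The committee `W' = {c1,c2,c3,c5,c6,c7,c8,c9}` (size 8) is core stable
in this profile. -/
theorem pav_k8_core_committee :
    ∀ T : Finset (Fin 10), T.Nonempty → T.card ≤ 8 →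
      ((univ.filter fun i => (profile4 i ∩ T).card
          > (profile4 i ∩ ({0, 1, 2, 4, 5, 6, 7, 8} : Finset (Fin 10))).card).card : ℚ)
        < (T.card : ℚ) * 4 / 8 := by
  intro T hne hcard
  have h := pav_k8_core_aux T hne hcard
  rw [lt_div_iff₀ (by norm_num : (0:ℚ) < 8)]
  have h' : ((2 * (univ.filter fun i => (profile4 i ∩ T).card
      > (profile4 i ∩ ({0, 1, 2, 4, 5, 6, 7, 8} : Finset (Fin 10))).card).card : ℕ) : ℚ)
      < (T.card : ℕ) := by exact_mod_cast h
  push_cast at h' ⊢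
  linarith
end

section
/- In the 4-voter profile on 10 candidates (voter 1: {c1,c2,c3}, voter 2: {c1,c2,c4}, voters 3,4: {c5,...,c10}), the committees W = {c1,c2,c5,c6,c7,c8,c9,c10} and W' = {c1,c2,c3,c5,c6,c7,c8,c9} have equal PAV score, namely each maximal among size-8 committees. -/
open Finset

/-- The PAV score of a committee `V` in this profile. -/
def pavScore4 (V : Finset (Fin 10)) : ℚ := ∑ i : Fin 4, pavHarmonic ((profile4 i ∩ V).card)

lemma pavH_succ (j : ℕ) : pavHarmonic (j+1) = pavHarmonic j + 1/(j+1) := by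
  simp [pavHarmonic, Finset.sum_range_succ]

lemma pavH0 : pavHarmonic 0 = 0 := by simp [pavHarmonic]
lemma pavH1 : pavHarmonic 1 = 1 := by norm_num [pavH_succ, pavH0]
lemma pavH2 : pavHarmonic 2 = 3/2 := by norm_num [pavH_succ, pavH1, pavH0]
lemma pavH3 : pavHarmonic 3 = 11/6 := by norm_num [pavH_succ, pavH2, pavH0]
lemma pavH4 : pavHarmonic 4 = 25/12 := by norm_num [pavH_succ, pavH3, pavH0]
lemma pavH5 : pavHarmonic 5 = 137/60 := by norm_num [pavH_succ, pavH4, pavH0]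
lemma pavH6 : pavHarmonic 6 = 49/20 := by norm_num [pavH_succ, pavH5, pavH0]

lemma score_formula (V : Finset (Fin 10)) :
    pavScore4 V = pavHarmonic (({0,1,2} ∩ V : Finset (Fin 10)).card)
      + pavHarmonic (({0,1,3} ∩ V : Finset (Fin 10)).card)
      + 2 * pavHarmonic (({4,5,6,7,8,9} ∩ V : Finset (Fin 10)).card) := by
  simp [pavScore4, Fin.sum_univ_four, profile4]
  ring

lemma key_bound (a b c : ℕ) (ha : a ≤ 3) (hb : b ≤ 3) (hc : c ≤ 6)
    (hac : a + c ≤ 8) (hbc : b + c ≤ 8) (habc : a + b + c ≤ 10) :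
    pavHarmonic a + pavHarmonic b + 2 * pavHarmonic c ≤ 79/10 := by
  interval_cases c <;> interval_cases a <;> interval_cases b <;>
    first
      | omega
      | norm_num [pavH0, pavH1, pavH2, pavH3, pavH4, pavH5, pavH6]

/-- The committees `W = {c1,c2,c5,…,c10}` and `W' = {c1,c2,c3,c5,…,c9}` have
equal PAV score, and each is maximal among all committees of size 8. -/
theorem pav_k8_tied_global :
    pavScore4 ({0, 1, 4, 5, 6, 7, 8, 9} : Finset (Fin 10))
      = pavScore4 ({0, 1, 2, 4, 5, 6, 7, 8} : Finset (Fin 10))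
    ∧ (∀ V : Finset (Fin 10), V.card = 8 →
        pavScore4 V ≤ pavScore4 ({0, 1, 4, 5, 6, 7, 8, 9} : Finset (Fin 10)))
    ∧ (∀ V : Finset (Fin 10), V.card = 8 →
        pavScore4 V ≤ pavScore4 ({0, 1, 2, 4, 5, 6, 7, 8} : Finset (Fin 10))) := by
  have hW : pavScore4 ({0, 1, 4, 5, 6, 7, 8, 9} : Finset (Fin 10)) = 79/10 := by
    rw [score_formula]
    have h1 : (({0,1,2} : Finset (Fin 10)) ∩ {0,1,4,5,6,7,8,9}).card = 2 := by decide
    have h2 : (({0,1,3} : Finset (Fin 10)) ∩ {0,1,4,5,6,7,8,9}).card = 2 := by decide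
    have h3 : (({4,5,6,7,8,9} : Finset (Fin 10)) ∩ {0,1,4,5,6,7,8,9}).card = 6 := by decide
    rw [h1, h2, h3, pavH2, pavH6]; norm_num
  have hW' : pavScore4 ({0, 1, 2, 4, 5, 6, 7, 8} : Finset (Fin 10)) = 79/10 := by
    rw [score_formula]
    have h1 : (({0,1,2} : Finset (Fin 10)) ∩ {0,1,2,4,5,6,7,8}).card = 3 := by decide
    have h2 : (({0,1,3} : Finset (Fin 10)) ∩ {0,1,2,4,5,6,7,8}).card = 2 := by decide
    have h3 : (({4,5,6,7,8,9} : Finset (Fin 10)) ∩ {0,1,2,4,5,6,7,8}).card = 5 := by decide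
    rw [h1, h2, h3, pavH3, pavH2, pavH5]; norm_num
  have main : ∀ V : Finset (Fin 10), V.card = 8 → pavScore4 V ≤ 79/10 := by
    intro V hV
    rw [score_formula]
    set A : Finset (Fin 10) := {0,1,2} with hA
    set B : Finset (Fin 10) := {0,1,3} with hB
    set Cs : Finset (Fin 10) := {4,5,6,7,8,9} with hCs
    have ha : (A ∩ V).card ≤ 3 := le_trans (card_le_card inter_subset_left) (by decide)
    have hb : (B ∩ V).card ≤ 3 := le_trans (card_le_card inter_subset_left) (by decide)
    have hc : (Cs ∩ V).card ≤ 6 := le_trans (card_le_card inter_subset_left) (by decide)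
    have hdisjAC : Disjoint (A ∩ V) (Cs ∩ V) :=
      Disjoint.mono inter_subset_left inter_subset_left (by rw [hA, hCs]; decide)
    have hac : (A ∩ V).card + (Cs ∩ V).card ≤ 8 := by
      rw [← card_union_of_disjoint hdisjAC, ← hV]
      exact card_le_card (union_subset inter_subset_right inter_subset_right)
    have hdisjBC : Disjoint (B ∩ V) (Cs ∩ V) :=
      Disjoint.mono inter_subset_left inter_subset_left (by rw [hB, hCs]; decide)
    have hbc : (B ∩ V).card + (Cs ∩ V).card ≤ 8 := by
      rw [← card_union_of_disjoint hdisjBC, ← hV]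
      exact card_le_card (union_subset inter_subset_right inter_subset_right)
    have hUnion : (A ∩ V) ∪ (B ∩ V) = (A ∪ B) ∩ V := (union_inter_distrib_right A B V).symm
    have hInter : (A ∩ V) ∩ (B ∩ V) = (A ∩ B) ∩ V := by
      ext x; simp [Finset.mem_inter]
    have hsum : (A ∩ V).card + (B ∩ V).card
        = ((A ∪ B) ∩ V).card + ((A ∩ B) ∩ V).card := by
      rw [← hUnion, ← hInter, card_union_add_card_inter]
    have hABsmall : ((A ∩ B) ∩ V).card ≤ 2 :=
      le_trans (card_le_card inter_subset_left) (by rw [hA, hB]; decide)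
    have hdisjDC : Disjoint ((A ∪ B) ∩ V) (Cs ∩ V) :=
      Disjoint.mono inter_subset_left inter_subset_left (by rw [hA, hB, hCs]; decide)
    have hdc : ((A ∪ B) ∩ V).card + (Cs ∩ V).card ≤ 8 := by
      rw [← card_union_of_disjoint hdisjDC, ← hV]
      exact card_le_card (union_subset inter_subset_right inter_subset_right)
    have habc : (A ∩ V).card + (B ∩ V).card + (Cs ∩ V).card ≤ 10 := by omega
    exact key_bound _ _ _ ha hb hc hac hbc habc
  refine ⟨by rw [hW, hW'], fun V h => by rw [hW]; exact main V h,
    fun V h => by rw [hW']; exact main V h⟩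
end

section
/- In the 24-voter profile on 8 candidates where voters 1–7 approve {c1,c2,c3}, voters 8–14 approve {c1,c2,c4}, and voters 15–24 approve {c5,c6,c7,c8}, the committee W = {c1,c2,c5,c6,c7,c8} of size k = 6 is not Droop core stable: T = {c1,c2,c3,c4} is supported by 14 voters and 14/24 > 4/7 = |T|/(k+1). -/
open Finset

/-- The 24-voter profile on 8 candidates from Example 6.1: voters 0–6 approve
`{c1,c2,c3}`, voters 7–13 approve `{c1,c2,c4}`, voters 14–23 approve `{c5,c6,c7,c8}`. -/
def profile24 : Fin 24 → Finset (Fin 8) :=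
  fun i => if (i : ℕ) < 7 then {0, 1, 2} else if (i : ℕ) < 14 then {0, 1, 3} else {4, 5, 6, 7}

/-- The committee `W = {c1,c2,c5,c6,c7,c8}` of size `k = 6` is not Droop
core stable: `T = {c1,c2,c3,c4}` is supported by 14 voters and `14 > 4·24/7`. -/
theorem pav_droop_k6_counterexample :
    (((univ.filter fun i => (profile24 i ∩ ({0, 1, 2, 3} : Finset (Fin 8))).card
          > (profile24 i ∩ ({0, 1, 4, 5, 6, 7} : Finset (Fin 8))).card).card : ℚ)
        > (({0, 1, 2, 3} : Finset (Fin 8)).card : ℚ) * 24 / (6 + 1))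
    ∧ ¬ (∀ T : Finset (Fin 8), T.Nonempty → T.card ≤ 6 →
        ((univ.filter fun i => (profile24 i ∩ T).card
            > (profile24 i ∩ ({0, 1, 4, 5, 6, 7} : Finset (Fin 8))).card).card : ℚ)
          ≤ (T.card : ℚ) * 24 / (6 + 1)) := by
  have h14 : (univ.filter fun i => (profile24 i ∩ ({0,1,2,3} : Finset (Fin 8))).card
      > (profile24 i ∩ ({0,1,4,5,6,7} : Finset (Fin 8))).card).card = 14 := by decide
  have h4 : (({0,1,2,3} : Finset (Fin 8)).card) = 4 := by decide
  constructor
  · rw [h14, h4]; norm_num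
  · intro h
    have := h {0,1,2,3} (by decide) (by decide)
    rw [h14, h4] at this
    norm_num at this
end

section
/- In the 27-voter profile on 11 candidates (voters 1–6 approve {c1,c2,c3}, voters 7–12 approve {c1,c2,c4}, voters 13–27 approve {c5,...,c11}), the committee W = {c1,c2,c5,c6,c7,c8,c9,c10,c11} of size k = 9 is not core stable: T = {c1,c2,c3,c4} is supported by 12 voters and 12 ≥ |T|·n/k = 4·27/9 = 12. -/
open Finset

/-- The 27-voter profile on 11 candidates: voters 0–5 approve `{c1,c2,c3}`, voters 6–11
approve `{c1,c2,c4}`, voters 12–26 approve `{c5,…,c11}`. -/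
def profile27 : Fin 27 → Finset (Fin 11) :=
  fun i => if (i : ℕ) < 6 then {0, 1, 2}
    else if (i : ℕ) < 12 then {0, 1, 3}
    else {4, 5, 6, 7, 8, 9, 10}

/-- The committee `W = {c1,c2,c5,…,c11}` of size `k = 9` is not core stable:
`T = {c1,c2,c3,c4}` is supported by 12 voters and `12 ≥ 4·27/9 = 12`. -/
theorem pav_k9_counterexample :
    (((univ.filter fun i => (profile27 i ∩ ({0, 1, 2, 3} : Finset (Fin 11))).card
          > (profile27 i ∩ ({0, 1, 4, 5, 6, 7, 8, 9, 10} : Finset (Fin 11))).card).card : ℚ)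
        ≥ (({0, 1, 2, 3} : Finset (Fin 11)).card : ℚ) * 27 / 9)
    ∧ ¬ (∀ T : Finset (Fin 11), T.Nonempty → T.card ≤ 9 →
        ((univ.filter fun i => (profile27 i ∩ T).card
            > (profile27 i ∩ ({0, 1, 4, 5, 6, 7, 8, 9, 10} : Finset (Fin 11))).card).card : ℚ)
          < (T.card : ℚ) * 27 / 9) := by
  have h1 : (univ.filter fun i => (profile27 i ∩ ({0, 1, 2, 3} : Finset (Fin 11))).card
          > (profile27 i ∩ ({0, 1, 4, 5, 6, 7, 8, 9, 10} : Finset (Fin 11))).card).card = 12 := by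
    decide
  have h2 : (({0, 1, 2, 3} : Finset (Fin 11)).card) = 4 := by decide
  constructor
  · rw [h1, h2]; norm_num
  · intro h
    have := h {0,1,2,3} ⟨0, by decide⟩ (by decide)
    rw [h1, h2] at this
    norm_num at this
end
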